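/- In LR-Subtraction Nim with nonempty S ⊆ ℤ≥2, if the outcome sequence is eventually 2-periodic alternating between L and R (i.e., there exists A such that for all n ≥ A, O_S(n) = L when n has one parity and O_S(n) = R when n has the other), then every element of S is even. -/
import Mathlib


open scoped Classical

inductive Outcome : Type
  | L | R | N | P
deriving DecidableEq

/-- Outcome determined from the set of outcomes of the options of a non-terminal position. -/
noncomputable def fromOptions (T : Set Outcome) : Outcome :=
  if Outcome.L ∈ T ∧ T ⊆ {Outcome.L, Outcome.N} then Outcome.L
  else if Outcome.R ∈ T ∧ T ⊆ {Outcome.R, Outcome.N} then Outcome.R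
  else if T = {Outcome.N} then Outcome.P
  else Outcome.N

/-- Outcome of Ending Partizan Subtraction Nim with removable set `S ⊆ ℤ≥2` and
terminal assignment `W`. -/
noncomputable def epOutcome (S : Set ℕ) (hS : ∀ s ∈ S, 2 ≤ s) (W : ℕ → Outcome) : ℕ → Outcome :=
  fun n => Nat.strongRecOn n (fun n ih =>
    if ∃ s ∈ S, s ≤ n then
      fromOptions {o | ∃ s, ∃ hs : s ∈ S, ∃ hsn : s ≤ n,
        o = ih (n - s) (by have := hS s hs; omega)}
    else W n)

/-- Outcome of `LR`-Subtraction Nim: at a terminal position, Left wins if the number of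
remaining tokens is even, Right wins if it is odd. -/
noncomputable def lrOutcome (S : Set ℕ) (hS : ∀ s ∈ S, 2 ≤ s) : ℕ → Outcome :=
  epOutcome S hS (fun n => if Even n then Outcome.L else Outcome.R)

lemma epOutcome_eq (S : Set ℕ) (hS : ∀ s ∈ S, 2 ≤ s) (W : ℕ → Outcome) (n : ℕ) :
    epOutcome S hS W n = if ∃ s ∈ S, s ≤ n then
      fromOptions {o | ∃ s, ∃ _ : s ∈ S, ∃ _ : s ≤ n, o = epOutcome S hS W (n - s)}
    else W n := by
  show Nat.lt_wfRel.wf.fix _ n = _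
  rw [WellFounded.fix_eq]
  rfl

theorem stmt13 (S : Set ℕ) (hS : ∀ s ∈ S, 2 ≤ s) (hne : S.Nonempty)
    (A : ℕ)
    (hper : ∀ n, A ≤ n → lrOutcome S hS (n + 2) = lrOutcome S hS n)
    (hvals : ∀ n, A ≤ n →
      lrOutcome S hS n = Outcome.L ∨ lrOutcome S hS n = Outcome.R)
    (hL : ∃ n, A ≤ n ∧ lrOutcome S hS n = Outcome.L)
    (hR : ∃ n, A ≤ n ∧ lrOutcome S hS n = Outcome.R) :
    ∀ s ∈ S, Even s := by
  -- periodicity with step 2*k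
  have per2 : ∀ k n, A ≤ n → lrOutcome S hS (n + 2 * k) = lrOutcome S hS n := by
    intro k
    induction k with
    | zero => intro n _; rfl
    | succ k ih =>
      intro n hn
      have h1 : n + 2 * (k + 1) = (n + 2 * k) + 2 := by ring
      rw [h1, hper _ (by omega), ih n hn]
  have same_par : ∀ m n, A ≤ m → A ≤ n → m % 2 = n % 2 →
      lrOutcome S hS m = lrOutcome S hS n := by
    intro m n hm hn hp
    rcases le_total m n with h | h
    · obtain ⟨k, hk⟩ : ∃ k, n = m + 2 * k := ⟨(n - m) / 2, by omega⟩
      rw [hk, per2 k m hm]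
    · obtain ⟨k, hk⟩ : ∃ k, m = n + 2 * k := ⟨(m - n) / 2, by omega⟩
      rw [hk, per2 k n hn]
  obtain ⟨nL, hnL, hnLL⟩ := hL
  obtain ⟨nR, hnR, hnRR⟩ := hR
  have hpar : nL % 2 ≠ nR % 2 := by
    intro h
    have := same_par nL nR hnL hnR h
    rw [hnLL, hnRR] at this
    exact Outcome.noConfusion this
  intro s hs
  by_contra hodd
  have hs2 := hS s hs
  -- big position with outcome L
  set n := nL + 2 * (s + A) with hn
  have hAn : A ≤ n := by omega
  have hnL' : lrOutcome S hS n = Outcome.L := by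
    rw [hn, per2 (s + A) nL hnL, hnLL]
  have hns : s ≤ n := by omega
  have hAns : A ≤ n - s := by omega
  have hso : s % 2 = 1 := Nat.not_even_iff.mp hodd
  -- n - s has the R parity
  have hparns : (n - s) % 2 = nR % 2 := by omega
  have hRns : lrOutcome S hS (n - s) = Outcome.R := by
    rw [same_par (n - s) nR hAns hnR hparns, hnRR]
  -- unfold outcome at n
  have hex : ∃ t ∈ S, t ≤ n := ⟨s, hs, hns⟩
  have heq : lrOutcome S hS n =
      fromOptions {o | ∃ t, ∃ _ : t ∈ S, ∃ _ : t ≤ n, o = lrOutcome S hS (n - t)} := by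
    rw [lrOutcome, epOutcome_eq, if_pos hex]
  set T : Set Outcome := {o | ∃ t, ∃ _ : t ∈ S, ∃ _ : t ≤ n, o = lrOutcome S hS (n - t)} with hT
  have hRT : Outcome.R ∈ T := ⟨s, hs, hns, hRns.symm⟩
  have hfL : fromOptions T = Outcome.L := by rw [← heq, hnL']
  rw [fromOptions] at hfL
  split_ifs at hfL with h1 h2 h3
  · have := h1.2 hRT
    simp only [Set.mem_insert_iff, Set.mem_singleton_iff] at this
    rcases this with h | h <;> exact Outcome.noConfusion h
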